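/- Let K, Ω be compact Hausdorff spaces and T : S_{C(K)} → S_{C(Ω)} a surjective phase-isometry. Then there exist a homeomorphism φ : Ω → K and a continuous unimodular function h on Ω such that for every f ∈ S_{C(K)} there is θ ∈ {-1, 1} with T(f)(s) = θ h(s) f(φ(s)) for all s ∈ Ω. -/

import Mathlib

/-!
For unit vectors, `max ‖f + g‖ ‖f - g‖ = 2` exactly when `f` and `g` have a common peak point
(`|f x| = |g x| = 1`), so `T` preserves the relation "peak sets meet" and therefore inclusion of
peak sets. For `s ∈ Ω`, the peak sets of the `f` with `|T f s| = 1` form a directed family of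
compact sets whose common point is `φ s`; testing against Urysohn functions peaking at `φ s`
upgrades `|f (φ s)| = 1 ↔ |T f s| = 1` to `|T f s| = |f (φ s)|`. Hence `T f = ± h · f ∘ φ`
pointwise, with `h = T 1`. The sign is global: for a bump `P ≥ 0` equal to `1` at two points,
`min ‖F + P‖ ‖F - P‖ ≤ 1` detects whether `F` has the same sign at both points, and this
quantity is preserved by `T`.
-/

open Set

lemma max_eq_max_of_pair_eq {α : Type*} [LinearOrder α] {a b c d : α}
    (h : ({a, b} : Set α) = {c, d}) : max a b = max c d := by
  rcases pair_eq_pair_iff.1 h with ⟨rfl, rfl⟩ | ⟨rfl, rfl⟩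
  exacts [rfl, max_comm _ _]

lemma min_eq_min_of_pair_eq {α : Type*} [LinearOrder α] {a b c d : α}
    (h : ({a, b} : Set α) = {c, d}) : min a b = min c d := by
  rcases pair_eq_pair_iff.1 h with ⟨rfl, rfl⟩ | ⟨rfl, rfl⟩
  exacts [rfl, min_comm _ _]

lemma abs_add_abs_eq_max_abs_add_abs_sub (a b : ℝ) : |a| + |b| = max |a + b| |a - b| := by
  refine le_antisymm ?_ (max_le (abs_add_le a b) (abs_sub a b))
  rcases le_total 0 a with ha | ha <;> rcases le_total 0 b with hb | hb <;>
    simp only [abs_of_nonneg, abs_of_nonpos, ha, hb, le_max_iff]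
  · exact Or.inl (le_abs_self _)
  · exact Or.inr (by linarith [le_abs_self (a - b)])
  · exact Or.inr (by linarith [neg_le_abs (a - b)])
  · exact Or.inl (by linarith [neg_le_abs (a + b)])

section Compact

variable {X : Type*} [TopologicalSpace X] [CompactSpace X]

lemma abs_apply_le_norm (f : C(X, ℝ)) (x : X) : |f x| ≤ ‖f‖ :=
  f.norm_coe_le_norm x

lemma norm_eq_norm_of_abs_eq {f g : C(X, ℝ)} (h : ∀ x, |f x| = |g x|) : ‖f‖ = ‖g‖ := by
  simp only [ContinuousMap.norm_eq_iSup_norm, Real.norm_eq_abs, h]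

lemma max_norm_add_sub_le_iff {f g : C(X, ℝ)} {C : ℝ} (hC : 0 ≤ C) :
    max ‖f + g‖ ‖f - g‖ ≤ C ↔ ∀ x, |f x| + |g x| ≤ C := by
  simp only [max_le_iff, ContinuousMap.norm_le _ hC, ContinuousMap.add_apply,
    ContinuousMap.sub_apply, Real.norm_eq_abs, ← forall_and, abs_add_abs_eq_max_abs_add_abs_sub]

lemma max_norm_add_sub_lt_iff {f g : C(X, ℝ)} {C : ℝ} (hC : 0 < C) :
    max ‖f + g‖ ‖f - g‖ < C ↔ ∀ x, |f x| + |g x| < C := by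
  simp only [max_lt_iff, ContinuousMap.norm_lt_iff _ hC, ContinuousMap.add_apply,
    ContinuousMap.sub_apply, Real.norm_eq_abs, ← forall_and, abs_add_abs_eq_max_abs_add_abs_sub]

lemma norm_comp_homeomorph {Y : Type*} [TopologicalSpace Y] [CompactSpace Y] (f : C(X, ℝ))
    (φ : Y ≃ₜ X) : ‖f.comp (φ : C(Y, X))‖ = ‖f‖ := by
  simp only [ContinuousMap.norm_eq_iSup_norm]
  exact φ.surjective.iSup_comp fun x => ‖f x‖

end Compact

section Urysohn

variable {X : Type*} [TopologicalSpace X] [CompactSpace X] [T2Space X]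

lemma exists_continuous_zero_one_norm_eq_one {C D : Set X} (hC : IsClosed C) (hD : IsClosed D)
    (hCD : Disjoint C D) (hD₀ : D.Nonempty) :
    ∃ u : C(X, ℝ), ‖u‖ = 1 ∧ EqOn u 0 C ∧ EqOn u 1 D ∧ ∀ x, u x ∈ Icc (0 : ℝ) 1 := by
  obtain ⟨u, hu0, hu1, huI⟩ := exists_continuous_zero_one_of_isClosed hC hD hCD
  obtain ⟨x, hx⟩ := hD₀
  refine ⟨u, le_antisymm ((ContinuousMap.norm_le _ zero_le_one).2 fun y => ?_) ?_, hu0, hu1, huI⟩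
  · rw [Real.norm_eq_abs, abs_of_nonneg (huI y).1]
    exact (huI y).2
  · simpa [hu1 hx] using abs_apply_le_norm u x

end Urysohn

def peakSet {X : Type*} [TopologicalSpace X] (f : C(X, ℝ)) : Set X := {x | |f x| = 1}

section PeakSet

variable {X : Type*} [TopologicalSpace X]

lemma isClosed_peakSet (f : C(X, ℝ)) : IsClosed (peakSet f) :=
  isClosed_eq f.continuous.abs continuous_const

variable [CompactSpace X]

lemma peakSet_nonempty {f : C(X, ℝ)} (hf : ‖f‖ = 1) : (peakSet f).Nonempty := by
  by_contra h
  have : ‖f‖ < 1 := (ContinuousMap.norm_lt_iff f zero_lt_one).2 fun x =>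
    (hf ▸ abs_apply_le_norm f x).lt_of_ne fun hx => h ⟨x, hx⟩
  exact this.ne hf

lemma norm_eq_one_of_peakSet_nonempty {f : C(X, ℝ)} (hf : ‖f‖ ≤ 1) (h : (peakSet f).Nonempty) :
    ‖f‖ = 1 :=
  le_antisymm hf (h.some_mem ▸ abs_apply_le_norm f _)

lemma peakSet_mul {f g : C(X, ℝ)} (hf : ‖f‖ ≤ 1) (hg : ‖g‖ ≤ 1) :
    peakSet (f * g) = peakSet f ∩ peakSet g := by
  ext x
  have h₁ := (abs_apply_le_norm f x).trans hf
  have h₂ := (abs_apply_le_norm g x).trans hg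
  simp only [peakSet, mem_ofPred_eq, mem_inter_iff, ContinuousMap.mul_apply, abs_mul]
  constructor
  · intro h
    constructor <;> nlinarith [abs_nonneg (f x), abs_nonneg (g x)]
  · rintro ⟨hfx, hgx⟩
    rw [hfx, hgx, one_mul]

lemma peakSet_inter_nonempty_iff {f g : C(X, ℝ)} (hf : ‖f‖ ≤ 1) (hg : ‖g‖ ≤ 1) :
    (peakSet f ∩ peakSet g).Nonempty ↔ 2 ≤ max ‖f + g‖ ‖f - g‖ := by
  constructor
  · rintro ⟨x, hfx, hgx⟩
    by_contra! h
    have := (max_norm_add_sub_lt_iff two_pos).1 h x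
    simp only [peakSet, mem_ofPred_eq] at hfx hgx
    linarith
  · intro h
    by_contra hempty
    refine h.not_gt ((max_norm_add_sub_lt_iff two_pos).2 fun x => ?_)
    have h₁ := (abs_apply_le_norm f x).trans hf
    have h₂ := (abs_apply_le_norm g x).trans hg
    by_contra! hx
    exact hempty ⟨x, (by linarith : |f x| = 1), (by linarith : |g x| = 1)⟩

variable [T2Space X]

lemma peakSet_subset_iff {f g : C(X, ℝ)} :
    peakSet f ⊆ peakSet g ↔
      ∀ k : C(X, ℝ), ‖k‖ = 1 → (peakSet f ∩ peakSet k).Nonempty →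
        (peakSet g ∩ peakSet k).Nonempty := by
  refine ⟨fun hs k _ ⟨x, hf, hk⟩ => ⟨x, hs hf, hk⟩, fun H x hx => ?_⟩
  by_contra hgx
  obtain ⟨k, hk, hk0, hk1, -⟩ := exists_continuous_zero_one_norm_eq_one (isClosed_peakSet g)
    isClosed_singleton (disjoint_singleton_right.2 hgx) (singleton_nonempty x)
  obtain ⟨y, hgy, hky⟩ := H k hk ⟨x, hx, by simp [peakSet, hk1 rfl]⟩
  simp [peakSet, hk0 hgy] at hky

lemma exists_max_norm_add_sub_le {f : C(X, ℝ)} (hf : ‖f‖ ≤ 1) {x : X} {c : ℝ} (hc : |f x| < c) :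
    ∃ u : C(X, ℝ), ‖u‖ = 1 ∧ u x = 1 ∧ max ‖f + u‖ ‖f - u‖ ≤ 1 + c := by
  have hc₀ : 0 ≤ c := (abs_nonneg _).trans hc.le
  obtain ⟨u, hu, hu0, hu1, huI⟩ := exists_continuous_zero_one_norm_eq_one
    (isClosed_le continuous_const (by fun_prop) : IsClosed {t | c ≤ |f t|}) isClosed_singleton
    (disjoint_singleton_right.2 (not_le.2 hc)) (singleton_nonempty x)
  refine ⟨u, hu, hu1 rfl, (max_norm_add_sub_le_iff (by linarith)).2 fun t => ?_⟩
  have hft := (abs_apply_le_norm f t).trans hf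
  by_cases ht : c ≤ |f t|
  · simp only [hu0 ht, Pi.zero_apply, abs_zero]
    linarith
  · rw [abs_of_nonneg (huI t).1]
    linarith [(huI t).2]

end PeakSet

section SignDetection

variable {X : Type*} [TopologicalSpace X] [CompactSpace X]

lemma norm_sub_le_one_of_mul_nonneg {F P : C(X, ℝ)} (hF : ‖F‖ ≤ 1)
    (hP : ∀ t, P t ∈ Icc (0 : ℝ) 1) (hFP : ∀ t, 0 ≤ F t * P t) : ‖F - P‖ ≤ 1 := by
  refine (ContinuousMap.norm_le _ zero_le_one).2 fun t => ?_
  obtain ⟨hF₁, hF₂⟩ := abs_le.1 ((abs_apply_le_norm F t).trans hF)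
  obtain ⟨hP₁, hP₂⟩ := hP t
  rw [ContinuousMap.sub_apply, Real.norm_eq_abs, abs_le]
  constructor <;> nlinarith [hFP t]

lemma one_lt_min_norm_add_sub {F P : C(X, ℝ)} {s₁ s₂ : X} (h₁ : P s₁ = 1) (h₂ : P s₂ = 1)
    (hF : F s₁ * F s₂ < 0) : 1 < min ‖F + P‖ ‖F - P‖ := by
  have a₁ := abs_apply_le_norm (F + P) s₁
  have a₂ := abs_apply_le_norm (F + P) s₂
  have b₁ := abs_apply_le_norm (F - P) s₁
  have b₂ := abs_apply_le_norm (F - P) s₂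
  simp only [ContinuousMap.add_apply, ContinuousMap.sub_apply, h₁, h₂] at a₁ a₂ b₁ b₂
  rw [lt_min_iff]
  constructor <;> by_contra! h
  · nlinarith [le_abs_self (F s₁ + 1), le_abs_self (F s₂ + 1)]
  · nlinarith [neg_abs_le (F s₁ - 1), neg_abs_le (F s₂ - 1)]

lemma min_norm_add_sub_le_one_iff {F P : C(X, ℝ)} {s₁ s₂ : X} (hF : ‖F‖ ≤ 1)
    (hP : ∀ t, P t ∈ Icc (0 : ℝ) 1) (h₁ : P s₁ = 1) (h₂ : P s₂ = 1)
    (hsupp : ∀ t, P t ≠ 0 → 0 < F t * F s₁ ∨ 0 < F t * F s₂) :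
    min ‖F + P‖ ‖F - P‖ ≤ 1 ↔ 0 < F s₁ * F s₂ := by
  have hF₁ : F s₁ ≠ 0 := fun h => by simpa [h] using hsupp s₁ (by simp [h₁])
  have hF₂ : F s₂ ≠ 0 := fun h => by simpa [h] using hsupp s₂ (by simp [h₂])
  refine ⟨fun hle => ?_, fun hpos => ?_⟩
  · by_contra! hneg
    exact (one_lt_min_norm_add_sub h₁ h₂ (hneg.lt_of_ne (mul_ne_zero hF₁ hF₂))).not_ge hle
  have hsign : ∀ t, 0 ≤ F s₁ * (F t * P t) := fun t => by
    rcases eq_or_ne (P t) 0 with h | h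
    · simp [h]
    have : 0 < F t * F s₁ := (hsupp t h).elim id fun h' => by
      nlinarith [mul_pos h' hpos, sq_nonneg (F s₂), mul_self_pos.2 hF₂]
    nlinarith [(hP t).1]
  rcases hF₁.lt_or_gt with hneg | hpos₁
  · refine (min_le_left _ _).trans ?_
    rw [← norm_neg, neg_add']
    exact norm_sub_le_one_of_mul_nonneg (by rwa [norm_neg]) hP fun t => by
      rw [ContinuousMap.neg_apply, neg_mul]
      nlinarith [hsign t]
  · exact (min_le_right _ _).trans (norm_sub_le_one_of_mul_nonneg hF hP fun t => by
      nlinarith [hsign t])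

end SignDetection

/-- Models the graph of a surjective phase-isometry on the unit spheres; it is a relation rather
than a map so that `flip` handles the inverse direction. -/
structure IsMaxNormCorrespondence {X Y : Type*} [TopologicalSpace X] [CompactSpace X]
    [TopologicalSpace Y] [CompactSpace Y] (R : C(X, ℝ) → C(Y, ℝ) → Prop) : Prop where
  norm_left : ∀ {f g}, R f g → ‖f‖ = 1
  norm_right : ∀ {f g}, R f g → ‖g‖ = 1
  exists_right : ∀ f, ‖f‖ = 1 → ∃ g, R f g
  exists_left : ∀ g, ‖g‖ = 1 → ∃ f, R f g
  max_eq : ∀ {f g f' g'}, R f g → R f' g' → max ‖f + f'‖ ‖f - f'‖ = max ‖g + g'‖ ‖g - g'‖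

def IsPeakPair {X Y : Type*} [TopologicalSpace X] [TopologicalSpace Y]
    (R : C(X, ℝ) → C(Y, ℝ) → Prop) (x : X) (y : Y) : Prop :=
  ∀ f g, R f g → (|f x| = 1 ↔ |g y| = 1)

lemma IsPeakPair.flip {X Y : Type*} [TopologicalSpace X] [TopologicalSpace Y]
    {R : C(X, ℝ) → C(Y, ℝ) → Prop} {x : X} {y : Y} (h : IsPeakPair R x y) :
    IsPeakPair (flip R) y x :=
  fun g f hfg => (h f g hfg).symm

namespace IsMaxNormCorrespondence

variable {X Y : Type*} [TopologicalSpace X] [CompactSpace X] [TopologicalSpace Y] [CompactSpace Y]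
  {R : C(X, ℝ) → C(Y, ℝ) → Prop}

lemma flip (hR : IsMaxNormCorrespondence R) : IsMaxNormCorrespondence (flip R) where
  norm_left := hR.norm_right
  norm_right := hR.norm_left
  exists_right := hR.exists_left
  exists_left := hR.exists_right
  max_eq h h' := (hR.max_eq h h').symm

lemma peakSet_inter_nonempty_iff (hR : IsMaxNormCorrespondence R) {f f' : C(X, ℝ)}
    {g g' : C(Y, ℝ)} (h : R f g) (h' : R f' g') :
    (peakSet f ∩ peakSet f').Nonempty ↔ (peakSet g ∩ peakSet g').Nonempty := by
  rw [_root_.peakSet_inter_nonempty_iff (hR.norm_left h).le (hR.norm_left h').le,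
    _root_.peakSet_inter_nonempty_iff (hR.norm_right h).le (hR.norm_right h').le, hR.max_eq h h']

lemma peakSet_subset [T2Space Y] (hR : IsMaxNormCorrespondence R) {f f' : C(X, ℝ)}
    {g g' : C(Y, ℝ)} (h : R f g) (h' : R f' g') (hs : peakSet f' ⊆ peakSet f) :
    peakSet g' ⊆ peakSet g := by
  refine peakSet_subset_iff.2 fun k hk hg'k => ?_
  obtain ⟨l, hlk⟩ := hR.exists_left k hk
  obtain ⟨x, hf'x, hlx⟩ := (hR.peakSet_inter_nonempty_iff h' hlk).2 hg'k
  exact (hR.peakSet_inter_nonempty_iff h hlk).1 ⟨x, hs hf'x, hlx⟩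

/-- `x` is a common point of the peak sets of all `f` related to some `g` peaking at `y`; this
family is directed because `peakSet (g * g') = peakSet g ∩ peakSet g'`. -/
lemma exists_isPeakPair [T2Space X] [T2Space Y] (hR : IsMaxNormCorrespondence R) (y : Y) :
    ∃ x, IsPeakPair R x y := by
  let I := {p : C(X, ℝ) × C(Y, ℝ) // R p.1 p.2 ∧ |p.2 y| = 1}
  have : Nonempty Y := ⟨y⟩
  obtain ⟨f₀, hf₀⟩ := hR.exists_left 1 norm_one
  have : Nonempty I := ⟨⟨(f₀, 1), hf₀, by simp⟩⟩
  have hdir : Directed (· ⊇ ·) fun i : I => peakSet i.1.1 := by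
    rintro ⟨⟨f, g⟩, hfg, hgy⟩ ⟨⟨f', g'⟩, hfg', hg'y⟩
    have hgg' := peakSet_mul (hR.norm_right hfg).le (hR.norm_right hfg').le
    have hnorm : ‖g * g'‖ = 1 := norm_eq_one_of_peakSet_nonempty
      ((norm_mul_le _ _).trans (by rw [hR.norm_right hfg, hR.norm_right hfg', one_mul]))
      ⟨y, hgg' ▸ ⟨hgy, hg'y⟩⟩
    obtain ⟨f'', hf''⟩ := hR.exists_left _ hnorm
    refine ⟨⟨(f'', g * g'), hf'', by simp [abs_mul, hgy, hg'y]⟩, ?_, ?_⟩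
    · exact hR.flip.peakSet_subset hfg hf'' (hgg' ▸ inter_subset_left)
    · exact hR.flip.peakSet_subset hfg' hf'' (hgg' ▸ inter_subset_right)
  obtain ⟨x, hx⟩ := IsCompact.nonempty_iInter_of_directed_nonempty_isCompact_isClosed _ hdir
    (fun i => peakSet_nonempty (hR.norm_left i.2.1)) (fun i => (isClosed_peakSet _).isCompact)
    (fun i => isClosed_peakSet _)
  refine ⟨x, fun f g hfg => ⟨fun hfx => ?_, fun hgy => mem_iInter.1 hx ⟨(f, g), hfg, hgy⟩⟩⟩
  by_contra hgy
  obtain ⟨v, hv, hv0, hv1, -⟩ := exists_continuous_zero_one_norm_eq_one (isClosed_peakSet g)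
    isClosed_singleton (disjoint_singleton_right.2 hgy) (singleton_nonempty y)
  obtain ⟨u, huv⟩ := hR.exists_left v hv
  have hux : |u x| = 1 := mem_iInter.1 hx ⟨(u, v), huv, by simp [hv1 rfl]⟩
  obtain ⟨t, htg, htv⟩ := (hR.peakSet_inter_nonempty_iff hfg huv).1 ⟨x, hfx, hux⟩
  simp [peakSet, hv0 htg] at htv

lemma eq_of_isPeakPair [T2Space Y] (hR : IsMaxNormCorrespondence R) {x : X} {y y' : Y}
    (h : IsPeakPair R x y) (h' : IsPeakPair R x y') : y = y' := by
  by_contra hne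
  obtain ⟨v, hv, hv0, hv1, -⟩ := exists_continuous_zero_one_norm_eq_one isClosed_singleton
    isClosed_singleton (disjoint_singleton.2 (Ne.symm hne)) (singleton_nonempty y)
  obtain ⟨u, huv⟩ := hR.exists_left v hv
  have := (h' u v huv).1 ((h u v huv).2 (by simp [hv1 rfl]))
  simp [hv0 rfl] at this

lemma abs_le_of_isPeakPair [T2Space X] (hR : IsMaxNormCorrespondence R) {x : X} {y : Y}
    (hxy : IsPeakPair R x y) {f : C(X, ℝ)} {g : C(Y, ℝ)} (hfg : R f g) : |g y| ≤ |f x| := by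
  refine le_of_forall_gt_imp_ge_of_dense fun c hc => ?_
  obtain ⟨u, hu, hux, hmax⟩ := exists_max_norm_add_sub_le (hR.norm_left hfg).le hc
  obtain ⟨v, huv⟩ := hR.exists_right u hu
  have hvy : |v y| = 1 := (hxy u v huv).1 (by simp [hux])
  have := (max_norm_add_sub_le_iff (by linarith [abs_nonneg (f x)])).1
    ((hR.max_eq hfg huv).symm.trans_le hmax) y
  linarith

lemma abs_eq_of_isPeakPair [T2Space X] [T2Space Y] (hR : IsMaxNormCorrespondence R)
    {x : X} {y : Y} (hxy : IsPeakPair R x y) {f : C(X, ℝ)} {g : C(Y, ℝ)} (hfg : R f g) :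
    |f x| = |g y| :=
  le_antisymm (hR.flip.abs_le_of_isPeakPair hxy.flip hfg) (hR.abs_le_of_isPeakPair hxy hfg)

lemma continuous_of_isPeakPair [T2Space X] [T2Space Y] (hR : IsMaxNormCorrespondence R) {φ : Y → X}
    (hφ : ∀ y, IsPeakPair R (φ y) y) : Continuous φ := by
  refine continuous_iff_continuousAt.2 fun y => ?_
  refine (nhds_basis_opens (φ y)).tendsto_right_iff.2 fun U ⟨hyU, hU⟩ => ?_
  obtain ⟨u, hu, hu0, hu1, -⟩ := exists_continuous_zero_one_norm_eq_one hU.isClosed_compl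
    isClosed_singleton (disjoint_singleton_right.2 (not_not.2 hyU)) (singleton_nonempty _)
  obtain ⟨v, huv⟩ := hR.exists_right u hu
  have hvy : v y ≠ 0 := by
    rw [← abs_pos, ← hR.abs_eq_of_isPeakPair (hφ y) huv, hu1 rfl]
    simp
  filter_upwards [v.continuous.continuousAt.eventually_ne hvy] with y' hy'
  by_contra hy'U
  exact hy' (abs_eq_zero.1 (by rw [← hR.abs_eq_of_isPeakPair (hφ y') huv, hu0 hy'U]; simp))

lemma exists_homeomorph_isPeakPair [T2Space X] [T2Space Y] (hR : IsMaxNormCorrespondence R) :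
    ∃ φ : Y ≃ₜ X, ∀ y, IsPeakPair R (φ y) y := by
  choose φ hφ using hR.exists_isPeakPair
  choose ψ hψ using hR.flip.exists_isPeakPair
  have hinj : φ.Injective := fun y y' h => hR.eq_of_isPeakPair (hφ y) (h ▸ hφ y')
  have hsurj : φ.Surjective := fun x => ⟨ψ x, hR.flip.eq_of_isPeakPair (hφ (ψ x)).flip (hψ x)⟩
  exact ⟨(hR.continuous_of_isPeakPair hφ :
    Continuous (Equiv.ofBijective φ ⟨hinj, hsurj⟩)).homeoOfEquivCompactToT2, hφ⟩

end IsMaxNormCorrespondence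

lemma exists_ne_zero_eq_neg_of_abs_eq {X : Type*} [TopologicalSpace X] {u v : C(X, ℝ)}
    (habs : ∀ s, |u s| = |v s|) (h : u ≠ v) :
    ∃ s, v s ≠ 0 ∧ u s = -v s := by
  obtain ⟨s, hs⟩ := DFunLike.ne_iff.1 h
  refine ⟨s, fun h0 => hs ?_, (abs_eq_abs.1 (habs s)).resolve_left hs⟩
  rw [h0, ← abs_eq_zero, habs s, h0, abs_zero]

section SignRigidity

variable {X : Type*} [TopologicalSpace X] [CompactSpace X] (V : C(X, ℝ) → C(X, ℝ))

lemma map_eq_or_eq_neg_of_nonneg (habs : ∀ F, ‖F‖ = 1 → ∀ s, |V F s| = |F s|)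
    (hmin : ∀ F G, ‖F‖ = 1 → ‖G‖ = 1 → min ‖V F + V G‖ ‖V F - V G‖ = min ‖F + G‖ ‖F - G‖)
    (hone : V 1 = 1) {G : C(X, ℝ)} (hG : ‖G‖ = 1) (hG₀ : ∀ s, 0 ≤ G s) : V G = G ∨ V G = -G := by
  by_contra! h
  obtain ⟨s₂, hG₂, hV₂⟩ := exists_ne_zero_eq_neg_of_abs_eq (habs G hG) h.1
  obtain ⟨s₁, hG₁, hV₁⟩ := exists_ne_zero_eq_neg_of_abs_eq (v := -G)
    (fun s => by rw [habs G hG, ContinuousMap.neg_apply, abs_neg]) h.2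
  have : Nonempty X := ⟨s₁⟩
  have h₁ : 0 < G s₁ := (hG₀ s₁).lt_of_ne (by simpa [eq_comm] using hG₁)
  have h₂ : 0 < G s₂ := (hG₀ s₂).lt_of_ne hG₂.symm
  have hlt : 1 < min ‖V G + 1‖ ‖V G - 1‖ := by
    refine one_lt_min_norm_add_sub (s₁ := s₁) (s₂ := s₂) rfl rfl ?_
    rw [hV₁, hV₂, ContinuousMap.neg_apply, neg_neg]
    nlinarith [mul_pos h₁ h₂]
  have hle : ‖G - 1‖ ≤ 1 := by
    rw [norm_sub_rev]
    refine norm_sub_le_one_of_mul_nonneg norm_one.le (fun s => ⟨hG₀ s, ?_⟩) fun s => by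
      simpa using hG₀ s
    simpa [abs_of_nonneg (hG₀ s), hG] using abs_apply_le_norm G s
  have := hmin G 1 hG norm_one
  rw [hone] at this
  rw [this] at hlt
  linarith [min_le_right ‖G + 1‖ ‖G - 1‖]

/-- If `V F` agreed with `F` at `s₁` and with `-F` at `s₂`, a bump `P` peaking at both points
would make `min ‖F + P‖ ‖F - P‖ ≤ 1` hold for exactly one of `F` and `V F`. -/
lemma map_eq_or_eq_neg [T2Space X] (habs : ∀ F, ‖F‖ = 1 → ∀ s, |V F s| = |F s|)
    (hmin : ∀ F G, ‖F‖ = 1 → ‖G‖ = 1 → min ‖V F + V G‖ ‖V F - V G‖ = min ‖F + G‖ ‖F - G‖)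
    (hone : V 1 = 1) {F : C(X, ℝ)} (hF : ‖F‖ = 1) : V F = F ∨ V F = -F := by
  by_contra! h
  obtain ⟨s₂, hF₂, hV₂⟩ := exists_ne_zero_eq_neg_of_abs_eq (habs F hF) h.1
  obtain ⟨s₁, hF₁, hV₁⟩ := exists_ne_zero_eq_neg_of_abs_eq (v := -F)
    (fun s => by rw [habs F hF, ContinuousMap.neg_apply, abs_neg]) h.2
  simp only [ContinuousMap.neg_apply, neg_neg, ne_eq, neg_eq_zero] at hV₁ hF₁
  set U : Set X := {t | 0 < F t * F s₁} ∩ {t | 0 < V F t * V F s₁} ∪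
    {t | 0 < F t * F s₂} ∩ {t | 0 < V F t * V F s₂}
  have hU : IsOpen U := by
    refine .union (.inter ?_ ?_) (.inter ?_ ?_) <;>
      exact isOpen_lt continuous_const ((map_continuous _).mul continuous_const)
  have hsU : {s₁, s₂} ⊆ U := by
    rw [insert_subset_iff, singleton_subset_iff]
    exact ⟨.inl ⟨mul_self_pos.2 hF₁, mul_self_pos.2 (hV₁ ▸ hF₁)⟩,
      .inr ⟨mul_self_pos.2 hF₂, mul_self_pos.2 (hV₂ ▸ neg_ne_zero.2 hF₂)⟩⟩
  obtain ⟨P, hP, hP0, hP1, hPI⟩ := exists_continuous_zero_one_norm_eq_one hU.isClosed_compl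
    (toFinite _).isClosed (disjoint_compl_left_iff_subset.2 hsU) (insert_nonempty _ _)
  have hsupp : ∀ t, P t ≠ 0 → t ∈ U := fun t ht => not_not.1 fun htU => ht (hP0 htU)
  have hP₁ : P s₁ = 1 := hP1 (mem_insert _ _)
  have hP₂ : P s₂ = 1 := hP1 (mem_insert_of_mem _ rfl)
  have hVP : min ‖V F + V P‖ ‖V F - V P‖ = min ‖V F + P‖ ‖V F - P‖ := by
    rcases map_eq_or_eq_neg_of_nonneg V habs hmin hone hP fun t => (hPI t).1 with e | e
    · rw [e]
    · rw [e, ← sub_eq_add_neg, sub_neg_eq_add, min_comm]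
  have hVF : ‖V F‖ ≤ 1 := (norm_eq_norm_of_abs_eq (habs F hF)).trans_le hF.le
  have hF' := min_norm_add_sub_le_one_iff hF.le hPI hP₁ hP₂ fun t ht =>
    (hsupp t ht).imp And.left And.left
  have hV' := min_norm_add_sub_le_one_iff hVF hPI hP₁ hP₂ fun t ht =>
    (hsupp t ht).imp And.right And.right
  rw [← hVP, hmin F P hF hP, hF', hV₁, hV₂] at hV'
  rcases (mul_ne_zero hF₁ hF₂).lt_or_gt with hneg | hpos
  · exact hneg.not_gt (hV'.2 (by linarith [neg_mul_neg (F s₁) (F s₂)]))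
  · exact (hV'.1 hpos).not_gt (by nlinarith)

end SignRigidity

lemma map_eq_or_eq_neg_mul_comp {K Ω : Type*} [TopologicalSpace K] [CompactSpace K]
    [TopologicalSpace Ω] [CompactSpace Ω] [T2Space Ω] (T : C(K, ℝ) → C(Ω, ℝ)) (φ : Ω ≃ₜ K)
    (habs : ∀ f, ‖f‖ = 1 → ∀ s, |T f s| = |f (φ s)|)
    (hmin : ∀ f g, ‖f‖ = 1 → ‖g‖ = 1 → min ‖T f + T g‖ ‖T f - T g‖ = min ‖f + g‖ ‖f - g‖)
    {f : C(K, ℝ)} (hf : ‖f‖ = 1) :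
    T f = T 1 * f.comp (φ : C(Ω, K)) ∨ T f = -(T 1 * f.comp (φ : C(Ω, K))) := by
  set h := T 1
  have habs_h : ∀ s, |h s| = 1 := fun s => by
    have : Nonempty K := ⟨φ s⟩
    simpa using habs 1 norm_one s
  have hh : h * h = 1 := by
    ext s
    rw [ContinuousMap.mul_apply, ← abs_mul_abs_self, habs_h, one_mul, ContinuousMap.one_apply]
  have hmul : ∀ u : C(Ω, ℝ), ‖h * u‖ = ‖u‖ := fun u =>
    norm_eq_norm_of_abs_eq fun s => by simp [abs_mul, habs_h]
  have hnorm : ∀ F : C(Ω, ℝ), ‖F.comp (φ.symm : C(K, Ω))‖ = ‖F‖ := fun F =>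
    norm_comp_homeomorph F φ.symm
  let V : C(Ω, ℝ) → C(Ω, ℝ) := fun F => h * T (F.comp (φ.symm : C(K, Ω)))
  have hVabs : ∀ F, ‖F‖ = 1 → ∀ s, |V F s| = |F s| := fun F hF s => by
    simp [V, abs_mul, habs_h, habs _ ((hnorm F).trans hF)]
  have hVmin : ∀ F G, ‖F‖ = 1 → ‖G‖ = 1 →
      min ‖V F + V G‖ ‖V F - V G‖ = min ‖F + G‖ ‖F - G‖ := fun F G hF hG => by
    simp only [V, ← mul_add, ← mul_sub, hmul]
    rw [hmin _ _ ((hnorm F).trans hF) ((hnorm G).trans hG), ← ContinuousMap.add_comp,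
      ← ContinuousMap.sub_comp, hnorm, hnorm]
  have hV_one : V 1 = 1 := by simpa [V] using hh
  have hcomp : (f.comp (φ : C(Ω, K))).comp (φ.symm : C(K, Ω)) = f := by
    ext
    simp
  rcases map_eq_or_eq_neg V hVabs hVmin hV_one (F := f.comp (φ : C(Ω, K)))
    ((norm_comp_homeomorph f φ).trans hf) with e | e <;> simp only [V, hcomp] at e
  · exact .inl (by rw [← e, ← mul_assoc, hh, one_mul])
  · exact .inr (by rw [← mul_neg, ← e, ← mul_assoc, hh, one_mul])

theorem stmt10 {K Ω : Type*} [TopologicalSpace K] [CompactSpace K] [T2Space K]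
    [TopologicalSpace Ω] [CompactSpace Ω] [T2Space Ω]
    (T : C(K, ℝ) → C(Ω, ℝ))
    (hmap : ∀ f : C(K, ℝ), ‖f‖ = 1 → ‖T f‖ = 1)
    (hsurj : ∀ g : C(Ω, ℝ), ‖g‖ = 1 → ∃ f : C(K, ℝ), ‖f‖ = 1 ∧ T f = g)
    (hphase : ∀ f g : C(K, ℝ), ‖f‖ = 1 → ‖g‖ = 1 →
      ({‖T f + T g‖, ‖T f - T g‖} : Set ℝ) = {‖f + g‖, ‖f - g‖}) :
    ∃ (φ : Ω ≃ₜ K) (h : C(Ω, ℝ)), (∀ s : Ω, |h s| = 1) ∧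
      ∀ f : C(K, ℝ), ‖f‖ = 1 → ∃ θ : ℝ, (θ = 1 ∨ θ = -1) ∧
        ∀ s : Ω, T f s = θ * h s * f (φ s) := by
  have hR : IsMaxNormCorrespondence fun f g => ‖f‖ = 1 ∧ T f = g :=
    { norm_left := And.left
      norm_right := fun ⟨hf, hfg⟩ => hfg ▸ hmap _ hf
      exists_right := fun f hf => ⟨T f, hf, rfl⟩
      exists_left := hsurj
      max_eq := by
        rintro f _ f' _ ⟨hf, rfl⟩ ⟨hf', rfl⟩
        exact (max_eq_max_of_pair_eq (hphase f f' hf hf')).symm }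
  obtain ⟨φ, hφ⟩ := hR.exists_homeomorph_isPeakPair
  have habs : ∀ f, ‖f‖ = 1 → ∀ s, |T f s| = |f (φ s)| := fun f hf s =>
    (hR.abs_eq_of_isPeakPair (hφ s) ⟨hf, rfl⟩).symm
  refine ⟨φ, T 1, fun s => ?_, fun f hf => ?_⟩
  · have : Nonempty K := ⟨φ s⟩
    simpa using habs 1 norm_one s
  rcases map_eq_or_eq_neg_mul_comp T φ habs
    (fun f g hf hg => min_eq_min_of_pair_eq (hphase f g hf hg)) hf with e | e
  · exact ⟨1, .inl rfl, fun s => by simp [e]⟩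
  · exact ⟨-1, .inr rfl, fun s => by simp [e]⟩
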